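/- arXiv:1809.08738 — 3 statements merged into one kernel-verified Lean document; each statement's English description precedes it below -/
import Mathlib

section
/- Let θ ∈ S₀, i.e. ‖θ‖₂ = 1 and Σ_i θ_i = 0. Then min_i θ_i/c_i < 0, and the point Ψ(θ) := −θ/(min_i θ_i/c_i) + C satisfies: Ψ(θ)_i ≥ 0 for all i, Σ_i Ψ(θ)_i = 1, and Ψ(θ)_{i₀} = 0 for every index i₀ attaining the minimum of θ_i/c_i; that is, Ψ maps S₀ into ∂Δ. -/
open scoped BigOperators

theorem Finset.exists_neg_of_sum_eq_zero {ι M : Type*} [Fintype ι] [AddCommMonoid M]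
    [LinearOrder M] [IsOrderedAddMonoid M] {f : ι → M} (hs : ∑ i, f i = 0) (hf : f ≠ 0) :
    ∃ i, f i < 0 := by
  by_contra! h
  exact hf (funext fun i => (Finset.sum_eq_zero_iff_of_nonneg fun j _ => h j).1 hs i
    (Finset.mem_univ i))

section Rescaling

variable {m t c : ℝ}

theorem neg_inv_mul_add_nonneg (hm : m < 0) (hc : 0 < c) (h : m ≤ t / c) :
    0 ≤ -m⁻¹ * t + c := by
  have hmc : m * c ≤ t := (le_div_iff₀ hc).1 h
  have : t / m ≤ c := by rw [div_le_iff_of_neg hm]; linarith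
  rw [neg_mul, ← div_eq_inv_mul]
  linarith

theorem neg_inv_mul_add_eq_zero (hm : m ≠ 0) (h : t / c = m) :
    -m⁻¹ * t + c = 0 := by
  rw [← h]
  field_simp [(div_ne_zero_iff.1 (h ▸ hm)).1]
  ring

theorem sum_neg_inv_mul_add_eq_one {ι : Type*} [Fintype ι] {θ C : ι → ℝ}
    (hθ : ∑ i, θ i = 0) (hC : ∑ i, C i = 1) : ∑ i, (-m⁻¹ * θ i + C i) = 1 := by
  rw [Finset.sum_add_distrib, ← Finset.mul_sum, hθ, hC, mul_zero, zero_add]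

end Rescaling

theorem stmt1_general (V : ℕ) (C θ : EuclideanSpace ℝ (Fin V))
    (hC0 : ∀ i, 0 < C i) (hC1 : ∑ i, C i = 1)
    (hθn : ‖θ‖ = 1) (hθs : ∑ i, θ i = 0)
    (m : ℝ) (hm : IsLeast {r : ℝ | ∃ i, r = θ i / C i} m) :
    m < 0 ∧
    (∀ i, 0 ≤ ((-(m⁻¹)) • θ + C : EuclideanSpace ℝ (Fin V)) i) ∧
    (∑ i, ((-(m⁻¹)) • θ + C : EuclideanSpace ℝ (Fin V)) i) = 1 ∧
    (∀ i₀, θ i₀ / C i₀ = m → ((-(m⁻¹)) • θ + C : EuclideanSpace ℝ (Fin V)) i₀ = 0) := by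
  have hle : ∀ i, m ≤ θ i / C i := fun i => hm.2 ⟨i, rfl⟩
  have hθ0 : (θ : Fin V → ℝ) ≠ 0 := by
    intro h
    have : θ = 0 := by ext i; exact congrFun h i
    simp [this] at hθn
  obtain ⟨j, hj⟩ := Finset.exists_neg_of_sum_eq_zero hθs hθ0
  have hm0 : m < 0 := (hle j).trans_lt (div_neg_of_neg_of_pos hj (hC0 j))
  simp only [PiLp.add_apply, PiLp.smul_apply, smul_eq_mul]
  exact ⟨hm0, fun i => neg_inv_mul_add_nonneg hm0 (hC0 i) (hle i),
    sum_neg_inv_mul_add_eq_one hθs hC1,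
    fun i₀ hi₀ => neg_inv_mul_add_eq_zero hm0.ne hi₀⟩

/-- For `θ ∈ S₀` (unit norm, coordinates summing to zero) and an interior
reference point `C ∈ Δ^{V-1}`, the minimum `m = min_i θ_i / c_i` is negative, and
`Ψ(θ) := -θ/m + C` has nonnegative coordinates summing to one, with `Ψ(θ)_{i₀} = 0`
for every index `i₀` attaining the minimum; i.e. `Ψ` maps `S₀` into `∂Δ`. -/
theorem stmt1 (V : ℕ) (hV : 2 ≤ V) (C θ : EuclideanSpace ℝ (Fin V))
    (hC0 : ∀ i, 0 < C i) (hC1 : ∑ i, C i = 1)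
    (hθn : ‖θ‖ = 1) (hθs : ∑ i, θ i = 0)
    (m : ℝ) (hm : IsLeast {r : ℝ | ∃ i, r = θ i / C i} m) :
    m < 0 ∧
    (∀ i, 0 ≤ ((-(m⁻¹)) • θ + C : EuclideanSpace ℝ (Fin V)) i) ∧
    (∑ i, ((-(m⁻¹)) • θ + C : EuclideanSpace ℝ (Fin V)) i) = 1 ∧
    (∀ i₀, θ i₀ / C i₀ = m → ((-(m⁻¹)) • θ + C : EuclideanSpace ℝ (Fin V)) i₀ = 0) :=
  stmt1_general V C θ hC0 hC1 hθn hθs m hm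
end

section
/- For every β ∈ ∂Δ one has Ψ(Γ(β)) = β; i.e. −Γ(β)/(min_i Γ(β)_i/c_i) + C = β. In particular Γ is injective on ∂Δ. -/
open scoped BigOperators

/-- The map `Γ(β) = (β - C)/‖β - C‖₂`. -/
noncomputable def Gamma (V : ℕ) (C β : EuclideanSpace ℝ (Fin V)) :
    EuclideanSpace ℝ (Fin V) :=
  ‖β - C‖⁻¹ • (β - C)

/-- The map `Ψ(θ) = -θ/(min_i θ_i/c_i) + C`. -/
noncomputable def Psi (V : ℕ) (hV : 0 < V) (C θ : EuclideanSpace ℝ (Fin V)) :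
    EuclideanSpace ℝ (Fin V) :=
  (-(Finset.univ.inf' ⟨⟨0, hV⟩, Finset.mem_univ _⟩ fun i => θ i / C i)⁻¹) • θ + C

/-- For every `β ∈ ∂Δ`, `Ψ(Γ(β)) = β`; in particular `Γ` is injective
on `∂Δ`. -/
theorem stmt2 (V : ℕ) (hV : 2 ≤ V) (C : EuclideanSpace ℝ (Fin V))
    (hC0 : ∀ i, 0 < C i) (hC1 : ∑ i, C i = 1) :
    (∀ β : EuclideanSpace ℝ (Fin V),
      (∀ i, 0 ≤ β i) → (∑ i, β i) = 1 → (∃ i, β i = 0) →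
        Psi V (by omega) C (Gamma V C β) = β) ∧
    Set.InjOn (Gamma V C)
      {β : EuclideanSpace ℝ (Fin V) |
        (∀ i, 0 ≤ β i) ∧ (∑ i, β i) = 1 ∧ ∃ i, β i = 0} := by
  have hV0 : 0 < V := by omega
  have main : ∀ β : EuclideanSpace ℝ (Fin V),
      (∀ i, 0 ≤ β i) → (∑ i, β i) = 1 → (∃ i, β i = 0) →
        Psi V hV0 C (Gamma V C β) = β := by
    rintro β hβ0 hβ1 ⟨i0, hi0⟩
    have hne : β - C ≠ 0 := by
      intro h
      have h2 : (β - C) i0 = 0 := by rw [h]; rfl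
      have h3 : β i0 - C i0 = 0 := h2
      have := hC0 i0
      rw [hi0] at h3
      linarith
    have hr : 0 < ‖β - C‖ := norm_pos_iff.mpr hne
    have hG : ∀ i, Gamma V C β i = ‖β - C‖⁻¹ * (β i - C i) := by
      intro i
      simp [Gamma, PiLp.smul_apply, PiLp.sub_apply, smul_eq_mul]
    have hinf : (Finset.univ.inf' ⟨⟨0, hV0⟩, Finset.mem_univ _⟩
        fun i => Gamma V C β i / C i) = -‖β - C‖⁻¹ := by
      apply le_antisymm
      · have hle : (Finset.univ.inf' ⟨⟨0, hV0⟩, Finset.mem_univ _⟩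
            fun i => Gamma V C β i / C i) ≤ Gamma V C β i0 / C i0 :=
          Finset.inf'_le _ (Finset.mem_univ i0)
        have : Gamma V C β i0 / C i0 = -‖β - C‖⁻¹ := by
          rw [hG i0, hi0]
          rw [zero_sub, mul_neg, neg_div, mul_div_assoc,
            div_self (hC0 i0).ne']
          ring
        rwa [this] at hle
      · apply Finset.le_inf'
        intro i _
        rw [hG i]
        have hCi := hC0 i
        have hb := hβ0 i
        have h1 : -1 ≤ (β i - C i) / C i := by
          rw [le_div_iff₀ hCi]; linarith
        have h2 : ‖β - C‖⁻¹ * (-1) ≤ ‖β - C‖⁻¹ * ((β i - C i) / C i) :=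
          mul_le_mul_of_nonneg_left h1 (by positivity)
        calc -‖β - C‖⁻¹ = ‖β - C‖⁻¹ * (-1) := by ring
          _ ≤ ‖β - C‖⁻¹ * ((β i - C i) / C i) := h2
          _ = ‖β - C‖⁻¹ * (β i - C i) / C i := by ring
    unfold Psi
    rw [hinf]
    have : -(-‖β - C‖⁻¹)⁻¹ = ‖β - C‖ := by
      rw [inv_neg, neg_neg, inv_inv]
    rw [this]
    unfold Gamma
    rw [smul_smul, mul_inv_cancel₀ hr.ne', one_smul, sub_add_cancel]
  refine ⟨main, ?_⟩
  rintro a ⟨ha0, ha1, ha2⟩ b ⟨hb0, hb1, hb2⟩ hab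
  have := main a ha0 ha1 ha2
  rw [← this, ← main b hb0 hb1 hb2, hab]
end

section
/- (Proposition 1: equivalence of MAP with an assignment problem.) Under the setup of the profiled SDM objective, assume additionally that τ₁ v_k + τ₀ θ_i^{prev} ≠ 0 for all 1 ≤ i ≤ L and 1 ≤ k ≤ K (this holds e.g. whenever τ₀ ≠ τ₁). Then max over feasible B ∈ {0,1}^{(L+K)×K} and θ ∈ S^{L+K} of F(B, θ) equals τ₀·L + max over feasible B of Σ_{i,k} B_{ik} C_{ik}. In particular, if B* maximizes the assignment objective Σ_{i,k} B_{ik} C_{ik} over feasible matrices (e.g. the output of the Hungarian algorithm for cost C), and θ* is defined from B* by the update rule θ*_i = (τ₁ v_k + τ₀ θ_i^{prev})/‖τ₁ v_k + τ₀ θ_i^{prev}‖ if B*_{ik} = 1 and i ≤ L, θ*_i = v_k if B*_{ik} = 1 and i > L, θ*_i = θ_i^{prev} if i ≤ L is unmatched, θ*_i an arbitrary unit vector if i > L is unmatched, then F(B*, θ*) ≥ F(B, θ) for all feasible B and all θ ∈ S^{L+K}. -/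
open RealInnerProductSpace

/-- `{0,1}`-valued indicator of a boolean entry of an assignment matrix. -/
def ind (b : Bool) : ℝ := if b then 1 else 0

/-- A binary matrix `B` (rows indexed by `I`, columns by `K'`) is feasible if each
column has exactly one `1` and each row has at most one `1`. -/
def Feasible {I K' : Type*} (B : I → K' → Bool) : Prop :=
  (∀ k, ∃! i, B i k = true) ∧
  (∀ i k₁ k₂, B i k₁ = true → B i k₂ = true → k₁ = k₂)

/-- The SDM objective `F(B, θ)` of Proposition 1: rows `Sum.inl i` are the `L`
previously seen global topics, rows `Sum.inr i'` are the potential `K` new topics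
(so row `Sum.inr i'` corresponds to row `i = L + i' + 1`, with `i - L = i' + 1`). -/
noncomputable def SDMF {E : Type*} [NormedAddCommGroup E] [InnerProductSpace ℝ E]
    {L K : ℕ} (τ₀ τ₁ γ₀ t : ℝ) (m : Fin L → ℝ)
    (θprev : Fin L → E) (v : Fin K → E)
    (B : Fin L ⊕ Fin K → Fin K → Bool) (θ : Fin L ⊕ Fin K → E) : ℝ :=
  (∑ i : Fin L,
      ⟪τ₁ • (∑ k, ind (B (Sum.inl i) k) • v k) + τ₀ • θprev i, θ (Sum.inl i)⟫) +
  (∑ i : Fin L, ∑ k, ind (B (Sum.inl i) k) * Real.log (m i / (t - m i))) +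
  (∑ i' : Fin K, τ₁ * ⟪∑ k, ind (B (Sum.inr i') k) • v k, θ (Sum.inr i')⟫) +
  (∑ i' : Fin K, ∑ k, ind (B (Sum.inr i') k) *
      (Real.log (γ₀ / t) - Real.log ((i' : ℕ) + 1)))

/-- The matching cost `C_{ik}` of Proposition 1. -/
noncomputable def SDMcost {E : Type*} [NormedAddCommGroup E] [InnerProductSpace ℝ E]
    {L K : ℕ} (τ₀ τ₁ γ₀ t : ℝ) (m : Fin L → ℝ)
    (θprev : Fin L → E) (v : Fin K → E) : Fin L ⊕ Fin K → Fin K → ℝ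
  | Sum.inl i, k => ‖τ₁ • v k + τ₀ • θprev i‖ - τ₀ + Real.log (m i / (t - m i))
  | Sum.inr i', _ => τ₁ + Real.log (γ₀ / t) - Real.log ((i' : ℕ) + 1)

/-- The assignment (Hungarian) objective `Σ_{i,k} B_{ik} C_{ik}`. -/
noncomputable def SDMassign {E : Type*} [NormedAddCommGroup E] [InnerProductSpace ℝ E]
    {L K : ℕ} (τ₀ τ₁ γ₀ t : ℝ) (m : Fin L → ℝ)
    (θprev : Fin L → E) (v : Fin K → E)
    (B : Fin L ⊕ Fin K → Fin K → Bool) : ℝ :=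
  ∑ i, ∑ k, ind (B i k) * SDMcost τ₀ τ₁ γ₀ t m θprev v i k

lemma sum_ind_single {K : ℕ} {M : Type*} [AddCommMonoid M] [Module ℝ M]
    (b : Fin K → Bool) (hb : ∀ k₁ k₂, b k₁ = true → b k₂ = true → k₁ = k₂)
    (k0 : Fin K) (h : b k0 = true) (f : Fin K → M) :
    ∑ k, ind (b k) • f k = f k0 := by
  rw [Finset.sum_eq_single k0]
  · simp [ind, h]
  · intro k _ hk
    have hbk : b k = false := by
      cases hbk : b k
      · rfl
      · exact absurd (hb k k0 hbk h) hk
    simp [ind, hbk]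
  · simp

lemma sum_ind_single_mul {K : ℕ}
    (b : Fin K → Bool) (hb : ∀ k₁ k₂, b k₁ = true → b k₂ = true → k₁ = k₂)
    (k0 : Fin K) (h : b k0 = true) (f : Fin K → ℝ) :
    ∑ k, ind (b k) * f k = f k0 := by
  simpa [smul_eq_mul] using sum_ind_single b hb k0 h f

/-- Per-row estimate for the `L` previously seen rows. -/
lemma left_row_le {E : Type*} [NormedAddCommGroup E] [InnerProductSpace ℝ E]
    {K : ℕ} (τ₀ τ₁ c : ℝ) (hτ₀ : 0 < τ₀)
    (θp θi : E) (hθp : ‖θp‖ = 1) (hθi : ‖θi‖ = 1)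
    (v : Fin K → E) (b : Fin K → Bool)
    (hb : ∀ k₁ k₂, b k₁ = true → b k₂ = true → k₁ = k₂)
    (C : Fin K → ℝ) (hC : ∀ k, C k = ‖τ₁ • v k + τ₀ • θp‖ - τ₀ + c) :
    ⟪τ₁ • (∑ k, ind (b k) • v k) + τ₀ • θp, θi⟫ + ∑ k, ind (b k) * c
      ≤ τ₀ + ∑ k, ind (b k) * C k := by
  by_cases hex : ∃ k, b k = true
  · obtain ⟨k0, hk0⟩ := hex
    rw [sum_ind_single b hb k0 hk0, sum_ind_single_mul b hb k0 hk0,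
      sum_ind_single_mul b hb k0 hk0, hC k0]
    have h1 := real_inner_le_norm (τ₁ • v k0 + τ₀ • θp) θi
    rw [hθi, mul_one] at h1
    linarith
  · push_neg at hex
    have hz : ∀ k, b k = false := fun k => by simpa using hex k
    simp only [hz, ind, Bool.false_eq_true, if_false, zero_smul, zero_mul,
      Finset.sum_const_zero, smul_zero, zero_add, add_zero]
    have h1 := real_inner_le_norm (τ₀ • θp) θi
    rw [hθi, mul_one, norm_smul, hθp, mul_one, Real.norm_eq_abs,
      abs_of_pos hτ₀] at h1
    exact h1

/-- Per-row estimate for the `K` new rows. -/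
lemma right_row_le {E : Type*} [NormedAddCommGroup E] [InnerProductSpace ℝ E]
    {K : ℕ} (τ₁ c C : ℝ) (hτ₁ : 0 < τ₁) (hcC : C = τ₁ + c)
    (θi : E) (hθi : ‖θi‖ = 1)
    (v : Fin K → E) (hv : ∀ k, ‖v k‖ = 1) (b : Fin K → Bool)
    (hb : ∀ k₁ k₂, b k₁ = true → b k₂ = true → k₁ = k₂) :
    τ₁ * ⟪∑ k, ind (b k) • v k, θi⟫ + ∑ k, ind (b k) * c
      ≤ ∑ k, ind (b k) * C := by
  by_cases hex : ∃ k, b k = true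
  · obtain ⟨k0, hk0⟩ := hex
    rw [sum_ind_single b hb k0 hk0, sum_ind_single_mul b hb k0 hk0,
      sum_ind_single_mul b hb k0 hk0, hcC]
    have h1 := real_inner_le_norm (v k0) θi
    rw [hθi, hv k0] at h1
    nlinarith
  · push_neg at hex
    have hz : ∀ k, b k = false := fun k => by simpa using hex k
    simp [hz, ind]

/-- Splitting `SDMF` into row sums. -/
lemma SDMF_split {E : Type*} [NormedAddCommGroup E] [InnerProductSpace ℝ E]
    {L K : ℕ} (τ₀ τ₁ γ₀ t : ℝ) (m : Fin L → ℝ)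
    (θprev : Fin L → E) (v : Fin K → E)
    (B : Fin L ⊕ Fin K → Fin K → Bool) (θ : Fin L ⊕ Fin K → E) :
    SDMF τ₀ τ₁ γ₀ t m θprev v B θ =
      (∑ i : Fin L,
        (⟪τ₁ • (∑ k, ind (B (Sum.inl i) k) • v k) + τ₀ • θprev i, θ (Sum.inl i)⟫
          + ∑ k, ind (B (Sum.inl i) k) * Real.log (m i / (t - m i)))) +
      (∑ i' : Fin K,
        (τ₁ * ⟪∑ k, ind (B (Sum.inr i') k) • v k, θ (Sum.inr i')⟫
          + ∑ k, ind (B (Sum.inr i') k) *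
              (Real.log (γ₀ / t) - Real.log ((i' : ℕ) + 1)))) := by
  unfold SDMF
  rw [Finset.sum_add_distrib, Finset.sum_add_distrib]
  ring

/-- Splitting `SDMassign` into row sums. -/
lemma SDMassign_split {E : Type*} [NormedAddCommGroup E] [InnerProductSpace ℝ E]
    {L K : ℕ} (τ₀ τ₁ γ₀ t : ℝ) (m : Fin L → ℝ)
    (θprev : Fin L → E) (v : Fin K → E)
    (B : Fin L ⊕ Fin K → Fin K → Bool) :
    SDMassign τ₀ τ₁ γ₀ t m θprev v B =
      (∑ i : Fin L, ∑ k, ind (B (Sum.inl i) k) *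
          (‖τ₁ • v k + τ₀ • θprev i‖ - τ₀ + Real.log (m i / (t - m i)))) +
      (∑ i' : Fin K, ∑ k, ind (B (Sum.inr i') k) *
          (τ₁ + Real.log (γ₀ / t) - Real.log ((i' : ℕ) + 1))) := by
  unfold SDMassign
  rw [Fintype.sum_sum_type]
  rfl

/-- The key upper bound: for any feasible `B` and unit vectors `θ`,
`F(B, θ) ≤ τ₀ L + Σ B C`. -/
lemma SDMF_le {E : Type*} [NormedAddCommGroup E] [InnerProductSpace ℝ E]
    {L K : ℕ} (τ₀ τ₁ γ₀ t : ℝ) (hτ₀ : 0 < τ₀) (hτ₁ : 0 < τ₁)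
    (m : Fin L → ℝ) (θprev : Fin L → E) (hθprev : ∀ i, ‖θprev i‖ = 1)
    (v : Fin K → E) (hv : ∀ k, ‖v k‖ = 1)
    (B : Fin L ⊕ Fin K → Fin K → Bool) (hB : Feasible B)
    (θ : Fin L ⊕ Fin K → E) (hθ : ∀ i, ‖θ i‖ = 1) :
    SDMF τ₀ τ₁ γ₀ t m θprev v B θ ≤
      τ₀ * L + SDMassign τ₀ τ₁ γ₀ t m θprev v B := by
  rw [SDMF_split, SDMassign_split]
  have h1 : (∑ i : Fin L,
        (⟪τ₁ • (∑ k, ind (B (Sum.inl i) k) • v k) + τ₀ • θprev i, θ (Sum.inl i)⟫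
          + ∑ k, ind (B (Sum.inl i) k) * Real.log (m i / (t - m i)))) ≤
      ∑ i : Fin L, (τ₀ + ∑ k, ind (B (Sum.inl i) k) *
          (‖τ₁ • v k + τ₀ • θprev i‖ - τ₀ + Real.log (m i / (t - m i)))) := by
    apply Finset.sum_le_sum
    intro i _
    exact left_row_le τ₀ τ₁ _ hτ₀ (θprev i) (θ (Sum.inl i)) (hθprev i)
      (hθ (Sum.inl i)) v (B (Sum.inl i)) (hB.2 (Sum.inl i)) _ (fun k => rfl)
  have h2 : (∑ i' : Fin K,
        (τ₁ * ⟪∑ k, ind (B (Sum.inr i') k) • v k, θ (Sum.inr i')⟫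
          + ∑ k, ind (B (Sum.inr i') k) *
              (Real.log (γ₀ / t) - Real.log ((i' : ℕ) + 1)))) ≤
      ∑ i' : Fin K, ∑ k, ind (B (Sum.inr i') k) *
          (τ₁ + Real.log (γ₀ / t) - Real.log ((i' : ℕ) + 1)) := by
    apply Finset.sum_le_sum
    intro i' _
    exact right_row_le τ₁ _ _ hτ₁ (by ring) (θ (Sum.inr i')) (hθ (Sum.inr i'))
      v hv (B (Sum.inr i')) (hB.2 (Sum.inr i'))
  have h3 : (∑ i : Fin L, (τ₀ + ∑ k, ind (B (Sum.inl i) k) *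
        (‖τ₁ • v k + τ₀ • θprev i‖ - τ₀ + Real.log (m i / (t - m i))))) =
      τ₀ * L + ∑ i : Fin L, ∑ k, ind (B (Sum.inl i) k) *
        (‖τ₁ • v k + τ₀ • θprev i‖ - τ₀ + Real.log (m i / (t - m i))) := by
    rw [Finset.sum_add_distrib, Finset.sum_const, Finset.card_univ,
      Fintype.card_fin, nsmul_eq_mul, mul_comm]
  linarith

/-- Proposition 1: equivalence of MAP with an assignment problem:
if `B*` maximizes the assignment objective over feasible matrices and `θ*` is
defined from `B*` by the update rule, then `(B*, θ*)` maximizes `F` over all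
feasible `B` and tuples `θ` of unit vectors, and the maximum value of `F` equals
`τ₀·L` plus the maximum of the assignment objective. -/
theorem stmt8 {E : Type*} [NormedAddCommGroup E] [InnerProductSpace ℝ E]
    [FiniteDimensional ℝ E] (hdim : 1 ≤ Module.finrank ℝ E)
    (L K : ℕ) (hK : 1 ≤ K)
    (θprev : Fin L → E) (hθprev : ∀ i, ‖θprev i‖ = 1)
    (v : Fin K → E) (hv : ∀ k, ‖v k‖ = 1)
    (τ₀ τ₁ γ₀ t : ℝ) (hτ₀ : 0 < τ₀) (hτ₁ : 0 < τ₁) (hγ₀ : 0 < γ₀) (ht : 0 < t)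
    (m : Fin L → ℝ) (hm : ∀ i, 0 < m i ∧ m i < t)
    (hnz : ∀ (i : Fin L) (k : Fin K), τ₁ • v k + τ₀ • θprev i ≠ 0)
    (Bstar : Fin L ⊕ Fin K → Fin K → Bool) (hBstar : Feasible Bstar)
    (hmax : ∀ B : Fin L ⊕ Fin K → Fin K → Bool, Feasible B →
      SDMassign τ₀ τ₁ γ₀ t m θprev v B ≤ SDMassign τ₀ τ₁ γ₀ t m θprev v Bstar)
    (θstar : Fin L ⊕ Fin K → E)
    (hθ1 : ∀ (i : Fin L) (k : Fin K), Bstar (Sum.inl i) k = true →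
      θstar (Sum.inl i) = ‖τ₁ • v k + τ₀ • θprev i‖⁻¹ • (τ₁ • v k + τ₀ • θprev i))
    (hθ2 : ∀ (i' : Fin K) (k : Fin K), Bstar (Sum.inr i') k = true →
      θstar (Sum.inr i') = v k)
    (hθ3 : ∀ i : Fin L, (∀ k, Bstar (Sum.inl i) k = false) →
      θstar (Sum.inl i) = θprev i)
    (hθ4 : ∀ i' : Fin K, (∀ k, Bstar (Sum.inr i') k = false) →
      ‖θstar (Sum.inr i')‖ = 1) :
    SDMF τ₀ τ₁ γ₀ t m θprev v Bstar θstar =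
      τ₀ * L + SDMassign τ₀ τ₁ γ₀ t m θprev v Bstar ∧
    ∀ (B : Fin L ⊕ Fin K → Fin K → Bool) (θ : Fin L ⊕ Fin K → E),
      Feasible B → (∀ i, ‖θ i‖ = 1) →
      SDMF τ₀ τ₁ γ₀ t m θprev v B θ ≤ SDMF τ₀ τ₁ γ₀ t m θprev v Bstar θstar := by
  have heq : SDMF τ₀ τ₁ γ₀ t m θprev v Bstar θstar =
      τ₀ * L + SDMassign τ₀ τ₁ γ₀ t m θprev v Bstar := by
    rw [SDMF_split, SDMassign_split]
    have h1 : (∑ i : Fin L,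
        (⟪τ₁ • (∑ k, ind (Bstar (Sum.inl i) k) • v k) + τ₀ • θprev i,
            θstar (Sum.inl i)⟫
          + ∑ k, ind (Bstar (Sum.inl i) k) * Real.log (m i / (t - m i)))) =
        ∑ i : Fin L, (τ₀ + ∑ k, ind (Bstar (Sum.inl i) k) *
          (‖τ₁ • v k + τ₀ • θprev i‖ - τ₀ + Real.log (m i / (t - m i)))) := by
      apply Finset.sum_congr rfl
      intro i _
      by_cases hex : ∃ k, Bstar (Sum.inl i) k = true
      · obtain ⟨k0, hk0⟩ := hex
        rw [sum_ind_single _ (hBstar.2 _) k0 hk0,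
          sum_ind_single_mul _ (hBstar.2 _) k0 hk0,
          sum_ind_single_mul _ (hBstar.2 _) k0 hk0, hθ1 i k0 hk0]
        set u := τ₁ • v k0 + τ₀ • θprev i with hu_def
        have hu : u ≠ 0 := hnz i k0
        have hnorm : (‖u‖ : ℝ) ≠ 0 := norm_ne_zero_iff.mpr hu
        have hinner : ⟪u, ‖u‖⁻¹ • u⟫ = ‖u‖ := by
          rw [real_inner_smul_right, real_inner_self_eq_norm_sq, sq]
          field_simp
        rw [hinner]
        ring
      · push_neg at hex
        have hz : ∀ k, Bstar (Sum.inl i) k = false := fun k => by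
          simpa using hex k
        rw [hθ3 i hz]
        simp only [hz, ind, Bool.false_eq_true, if_false, zero_smul, zero_mul,
          Finset.sum_const_zero, smul_zero, zero_add, add_zero]
        rw [real_inner_smul_left, real_inner_self_eq_norm_mul_norm, hθprev i]
        ring
    have h2 : (∑ i' : Fin K,
        (τ₁ * ⟪∑ k, ind (Bstar (Sum.inr i') k) • v k, θstar (Sum.inr i')⟫
          + ∑ k, ind (Bstar (Sum.inr i') k) *
              (Real.log (γ₀ / t) - Real.log ((i' : ℕ) + 1)))) =
        ∑ i' : Fin K, ∑ k, ind (Bstar (Sum.inr i') k) *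
          (τ₁ + Real.log (γ₀ / t) - Real.log ((i' : ℕ) + 1)) := by
      apply Finset.sum_congr rfl
      intro i' _
      by_cases hex : ∃ k, Bstar (Sum.inr i') k = true
      · obtain ⟨k0, hk0⟩ := hex
        rw [sum_ind_single _ (hBstar.2 _) k0 hk0,
          sum_ind_single_mul _ (hBstar.2 _) k0 hk0,
          sum_ind_single_mul _ (hBstar.2 _) k0 hk0, hθ2 i' k0 hk0,
          real_inner_self_eq_norm_mul_norm, hv k0]
        ring
      · push_neg at hex
        have hz : ∀ k, Bstar (Sum.inr i') k = false := fun k => by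
          simpa using hex k
        simp [hz, ind]
    have h3 : (∑ i : Fin L, (τ₀ + ∑ k, ind (Bstar (Sum.inl i) k) *
          (‖τ₁ • v k + τ₀ • θprev i‖ - τ₀ + Real.log (m i / (t - m i))))) =
        τ₀ * L + ∑ i : Fin L, ∑ k, ind (Bstar (Sum.inl i) k) *
          (‖τ₁ • v k + τ₀ • θprev i‖ - τ₀ + Real.log (m i / (t - m i))) := by
      rw [Finset.sum_add_distrib, Finset.sum_const, Finset.card_univ,
        Fintype.card_fin, nsmul_eq_mul, mul_comm]
    rw [h1, h2, h3]
    ring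
  refine ⟨heq, fun B θ hB hθ => ?_⟩
  calc SDMF τ₀ τ₁ γ₀ t m θprev v B θ
      ≤ τ₀ * L + SDMassign τ₀ τ₁ γ₀ t m θprev v B :=
        SDMF_le τ₀ τ₁ γ₀ t hτ₀ hτ₁ m θprev hθprev v hv B hB θ hθ
    _ ≤ τ₀ * L + SDMassign τ₀ τ₁ γ₀ t m θprev v Bstar := by
        linarith [hmax B hB]
    _ = SDMF τ₀ τ₁ γ₀ t m θprev v Bstar θstar := heq.symm
end
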